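/- arXiv:1602.03083 — 4 statements merged into one kernel-verified Lean document; each statement's English description precedes it below -/
import Mathlib

section
/- Let a, b be natural numbers with 0 < b < a, and let u, v be natural numbers with u > 0 such that |a·u − b·v| < |a·u' − b·v'| for all natural numbers u', v' with 0 < u' ≤ u and v'/u' ≠ v/u (as rationals). Then there exists an index i with 0 ≤ i ≤ n such that v/u = v_i/u_i (as rationals). (No exception concerning a/b = a_0 + 1/2 is needed for this direction.) -/
/-- Remainder chain of the Euclidean algorithm, shifted by 2:
`euclidR a b k = r_{k-2}`, so `euclidR a b 0 = r_{-2} = a`, `euclidR a b 1 = r_{-1} = b`,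
and `r_i = r_{i-2} mod r_{i-1}`. -/
def euclidR (a b : ℕ) : ℕ → ℕ
  | 0 => a
  | 1 => b
  | k + 2 => euclidR a b k % euclidR a b (k + 1)

/-- The partial quotients of the continued fraction of `a/b`:
`euclidQ a b i = a_i = r_{i-2} div r_{i-1}`. -/
def euclidQ (a b : ℕ) (i : ℕ) : ℕ := euclidR a b i / euclidR a b (i + 1)

/-- Denominators of the convergents, shifted by 2: `convU a b k = u_{k-2}`,
with `u_{-2} = 1`, `u_{-1} = 0` and `u_i = u_{i-1}·a_i + u_{i-2}`. -/
def convU (a b : ℕ) : ℕ → ℕ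
  | 0 => 1
  | 1 => 0
  | k + 2 => convU a b (k + 1) * euclidQ a b k + convU a b k

/-- Numerators of the convergents, shifted by 2: `convV a b k = v_{k-2}`,
with `v_{-2} = 0`, `v_{-1} = 1` and `v_i = v_{i-1}·a_i + v_{i-2}`. -/
def convV (a b : ℕ) : ℕ → ℕ
  | 0 => 0
  | 1 => 1
  | k + 2 => convV a b (k + 1) * euclidQ a b k + convV a b k

/-!
If `u` lies strictly between consecutive denominators `u_i ≤ u < u_{i+1}`, unimodularity of the
convergent matrix writes `(u, v) = x (u_i, v_i) + y (u_{i+1}, v_{i+1})` with integers `x, y`.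
Either `y = 0`, and `v/u` is the convergent `v_i/u_i`, or `x` and `y` have opposite signs; since the
errors `a u_i − b v_i = (−1)^i r_i` alternate in sign, the error of `(u, v)` is then at least `r_i`,
so `(u_i, v_i)` beats `(u, v)`. If `u ≥ u_n`, the last convergent has error `0`.
-/

/-- `(u, v)` is a best approximation of the second kind of `a / b`. -/
def IsBestApprox (a b u v : ℕ) : Prop :=
  ∀ u' v' : ℕ, 0 < u' → u' ≤ u → (v' : ℚ) / (u' : ℚ) ≠ (v : ℚ) / (u : ℚ) →
    |(a : ℤ) * u - (b : ℤ) * v| < |(a : ℤ) * u' - (b : ℤ) * v'|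

theorem IsBestApprox.div_eq_of_abs_le {a b u v u' v' : ℕ} (h : IsBestApprox a b u v)
    (hu' : 0 < u') (hle : u' ≤ u) (herr : |(a : ℤ) * u' - b * v'| ≤ |(a : ℤ) * u - b * v|) :
    (v : ℚ) / u = v' / u' := by
  by_contra hne
  exact (h u' v' hu' hle (Ne.symm hne)).not_ge herr

theorem exists_le_and_lt_succ {f : ℕ → ℕ} {u : ℕ} (h0 : f 0 ≤ u) :
    ∀ {m : ℕ}, u < f m → ∃ k < m, f k ≤ u ∧ u < f (k + 1)
  | 0, hm => absurd h0 hm.not_ge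
  | m + 1, hm => by
    by_cases hfm : f m ≤ u
    · exact ⟨m, m.lt_succ_self, hfm, hm⟩
    · obtain ⟨k, hk, hfk⟩ := exists_le_and_lt_succ h0 (not_le.mp hfm)
      exact ⟨k, hk.trans m.lt_succ_self, hfk⟩

theorem exists_add_mul_eq_of_isUnit_det {R : Type*} [CommRing R] {u₀ v₀ u₁ v₁ : R}
    (hdet : IsUnit (v₁ * u₀ - v₀ * u₁)) (u v : R) :
    ∃ x y : R, x * u₀ + y * u₁ = u ∧ x * v₀ + y * v₁ = v := by
  obtain ⟨d, hd⟩ := hdet.exists_right_inv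
  refine ⟨d * (u * v₁ - v * u₁), d * (u₀ * v - v₀ * u), ?_, ?_⟩
  · linear_combination u * hd
  · linear_combination v * hd

theorem mul_neg_of_add_mul_eq {x y p q u : ℤ} (hp : 0 ≤ p) (hu : 0 < u) (huq : u < q)
    (h : x * p + y * q = u) (hy : y ≠ 0) : x * y < 0 := by
  by_contra! hxy
  rcases hy.lt_or_gt with hy | hy
  · have hx : x ≤ 0 := nonpos_of_mul_nonneg_left hxy hy
    nlinarith
  · have hx : 0 ≤ x := nonneg_of_mul_nonneg_left hxy hy
    nlinarith

theorem abs_le_abs_mul_add_mul {x y e₀ e₁ : ℤ} (hxy : x * y < 0) (he : e₀ * e₁ ≤ 0) :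
    |e₀| ≤ |x * e₀ + y * e₁| := by
  have hx : 1 ≤ |x| := Int.one_le_abs (left_ne_zero_of_mul hxy.ne)
  have hsame : 0 ≤ (x * e₀) * (y * e₁) := by nlinarith
  calc |e₀| ≤ |x| * |e₀| := le_mul_of_one_le_left (abs_nonneg _) hx
    _ = |x * e₀| := (abs_mul x e₀).symm
    _ ≤ |x * e₀| + |y * e₁| := le_add_of_nonneg_right (abs_nonneg _)
    _ = |x * e₀ + y * e₁| := by
      rcases mul_nonneg_iff.mp hsame with ⟨h₀, h₁⟩ | ⟨h₀, h₁⟩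
      · rw [abs_of_nonneg h₀, abs_of_nonneg h₁, abs_of_nonneg (add_nonneg h₀ h₁)]
      · rw [abs_of_nonpos h₀, abs_of_nonpos h₁, abs_of_nonpos (add_nonpos h₀ h₁), neg_add]

section Convergents

variable (a b : ℕ)

theorem euclidR_add_two_add_mul_euclidQ (k : ℕ) :
    euclidR a b (k + 2) + euclidR a b (k + 1) * euclidQ a b k = euclidR a b k :=
  Nat.mod_add_div _ _

theorem convU_add_two (k : ℕ) :
    convU a b (k + 2) = convU a b (k + 1) * euclidQ a b k + convU a b k := rfl

theorem convV_add_two (k : ℕ) :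
    convV a b (k + 2) = convV a b (k + 1) * euclidQ a b k + convV a b k := rfl

theorem convU_two : convU a b 2 = 1 := by simp [convU]

theorem mul_convU_sub_mul_convV : ∀ k : ℕ,
    (a : ℤ) * convU a b k - b * convV a b k = (-1) ^ k * euclidR a b k
  | 0 => by simp [convU, convV, euclidR]
  | 1 => by simp [convU, convV, euclidR]
  | k + 2 => by
    have hr := congrArg (Nat.cast (R := ℤ)) (euclidR_add_two_add_mul_euclidQ a b k)
    push_cast at hr
    rw [convU_add_two, convV_add_two]
    push_cast
    linear_combination (euclidQ a b k : ℤ) * mul_convU_sub_mul_convV (k + 1)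
      + mul_convU_sub_mul_convV k - (-1 : ℤ) ^ k * hr

theorem convV_succ_mul_convU_sub : ∀ k : ℕ,
    (convV a b (k + 1) : ℤ) * convU a b k - convV a b k * convU a b (k + 1) = (-1) ^ k
  | 0 => by simp [convU, convV]
  | k + 1 => by
    rw [convU_add_two, convV_add_two]
    push_cast
    linear_combination (-1 : ℤ) * convV_succ_mul_convU_sub k

theorem mul_convU_sub_mul_convV_mul_succ_nonpos (k : ℕ) :
    ((a : ℤ) * convU a b k - b * convV a b k)
      * ((a : ℤ) * convU a b (k + 1) - b * convV a b (k + 1)) ≤ 0 := by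
  rw [mul_convU_sub_mul_convV, mul_convU_sub_mul_convV]
  have hsq : ((-1 : ℤ) ^ k) ^ 2 = 1 := by rw [← pow_mul, pow_mul']; simp
  have hprod : (-1 : ℤ) ^ k * euclidR a b k * ((-1) ^ (k + 1) * euclidR a b (k + 1))
      = -(euclidR a b k * euclidR a b (k + 1) : ℤ) := by
    rw [pow_succ]
    linear_combination (-(euclidR a b k * euclidR a b (k + 1) : ℤ)) * hsq
  rw [hprod, neg_nonpos]
  positivity

theorem one_le_euclidQ_succ {k : ℕ} (h₁ : euclidR a b (k + 1) ≠ 0)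
    (h₂ : euclidR a b (k + 2) ≠ 0) : 1 ≤ euclidQ a b (k + 1) :=
  (Nat.one_le_div_iff (Nat.pos_of_ne_zero h₂)).mpr (Nat.mod_lt _ (Nat.pos_of_ne_zero h₁)).le

theorem one_le_convU {n : ℕ} (hr : ∀ k ≤ n, euclidR a b (k + 1) ≠ 0) :
    ∀ k ≤ n, 1 ≤ convU a b (k + 2)
  | 0, _ => (convU_two a b).ge
  | 1, h1 => by
    rw [convU_add_two, convU_two]
    simpa [convU] using one_le_euclidQ_succ a b (hr 0 (by omega)) (hr 1 h1)
  | k + 2, hk => (one_le_convU hr k (by omega)).trans (Nat.le_add_left _ _)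

theorem div_eq_convergent_or_abs_le (k : ℕ) {u : ℕ} (v : ℕ) (hu : 0 < u)
    (hlt : u < convU a b (k + 1)) :
    (v : ℚ) / u = convV a b k / convU a b k ∨
      |(a : ℤ) * convU a b k - b * convV a b k| ≤ |(a : ℤ) * u - b * v| := by
  have hdet : IsUnit ((convV a b (k + 1) : ℤ) * convU a b k - convV a b k * convU a b (k + 1)) := by
    rw [convV_succ_mul_convU_sub]
    exact isUnit_neg_one.pow k
  obtain ⟨x, y, hxu, hxv⟩ := exists_add_mul_eq_of_isUnit_det hdet (u : ℤ) v
  rcases eq_or_ne y 0 with rfl | hy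
  · left
    simp only [zero_mul, add_zero] at hxu hxv
    have hU : convU a b k ≠ 0 := by
      rintro h
      rw [h, Nat.cast_zero, mul_zero] at hxu
      omega
    rw [div_eq_div_iff (by positivity) (by exact_mod_cast hU)]
    exact_mod_cast (by rw [← hxu, ← hxv]; ring : (v : ℤ) * convU a b k = convV a b k * u)
  · right
    have hxy := mul_neg_of_add_mul_eq (Nat.cast_nonneg _) (by exact_mod_cast hu)
      (by exact_mod_cast hlt) hxu hy
    have herr : (a : ℤ) * u - b * v = x * ((a : ℤ) * convU a b k - b * convV a b k)
        + y * ((a : ℤ) * convU a b (k + 1) - b * convV a b (k + 1)) := by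
      rw [← hxu, ← hxv]; ring
    rw [herr]
    exact abs_le_abs_mul_add_mul hxy (mul_convU_sub_mul_convV_mul_succ_nonpos a b k)

end Convergents

theorem best_approximation_is_convergent_general
    (a b : ℕ) (hb : 0 < b)
    (n : ℕ) (hn : euclidR a b (n + 2) = 0)
    (u v : ℕ) (hu : 0 < u)
    (hbest : ∀ u' v' : ℕ, 0 < u' → u' ≤ u →
      (v' : ℚ) / (u' : ℚ) ≠ (v : ℚ) / (u : ℚ) →
      |(a : ℤ) * u - (b : ℤ) * v| < |(a : ℤ) * u' - (b : ℤ) * v'|) :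
    ∃ i ≤ n, (v : ℚ) / (u : ℚ) = (convV a b (i + 2) : ℚ) / (convU a b (i + 2) : ℚ) := by
  -- Beyond the first zero remainder the chain can restart (`r % 0 = r`) and denominators vanish.
  have hex : ∃ m, euclidR a b (m + 2) = 0 := ⟨n, hn⟩
  obtain ⟨m, hm, hmn, hmin⟩ : ∃ m, euclidR a b (m + 2) = 0 ∧ m ≤ n ∧
      ∀ k < m, euclidR a b (k + 2) ≠ 0 :=
    ⟨Nat.find hex, Nat.find_spec hex, Nat.find_min' hex hn, fun _ hk => Nat.find_min hex hk⟩
  have hr : ∀ k ≤ m, euclidR a b (k + 1) ≠ 0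
    | 0, _ => hb.ne'
    | k + 1, hk => hmin k hk
  have hbest' : IsBestApprox a b u v := hbest
  by_cases hlast : convU a b (m + 2) ≤ u
  · refine ⟨m, hmn, hbest'.div_eq_of_abs_le (one_le_convU a b hr m le_rfl) hlast ?_⟩
    rw [mul_convU_sub_mul_convV, hm, Nat.cast_zero, mul_zero, abs_zero]
    exact abs_nonneg _
  obtain ⟨k, hkm, hku, hlt⟩ := exists_le_and_lt_succ (f := fun j => convU a b (j + 2))
    ((convU_two a b).trans_le hu) (not_le.mp hlast)
  refine ⟨k, by omega, ?_⟩
  rcases div_eq_convergent_or_abs_le a b (k + 2) v hu hlt with h | h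
  · exact h
  · exact hbest'.div_eq_of_abs_le (one_le_convU a b hr k hkm.le) hku h

/-- (Proposition 2.1, direction 1) ⇒ 2)).
If `0 < b < a` and `(u, v)` with `u > 0` is a best approximation of the second kind, i.e.
`|a·u − b·v| < |a·u' − b·v'|` for all `u', v'` with `0 < u' ≤ u` and `v'/u' ≠ v/u`
(as rationals), then `v/u = v_i/u_i` for some `0 ≤ i ≤ n`. No exception concerning
`a/b = a_0 + 1/2` is needed for this direction. -/
theorem best_approximation_is_convergent
    (a b : ℕ) (hb : 0 < b) (hba : b < a)
    (n : ℕ) (hn : euclidR a b (n + 2) = 0) (hn' : 0 < euclidR a b (n + 1))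
    (u v : ℕ) (hu : 0 < u)
    (hbest : ∀ u' v' : ℕ, 0 < u' → u' ≤ u →
      (v' : ℚ) / (u' : ℚ) ≠ (v : ℚ) / (u : ℚ) →
      |(a : ℤ) * u - (b : ℤ) * v| < |(a : ℤ) * u' - (b : ℤ) * v'|) :
    ∃ i ≤ n, (v : ℚ) / (u : ℚ) = (convV a b (i + 2) : ℚ) / (convU a b (i + 2) : ℚ) :=
  best_approximation_is_convergent_general a b hb n hn u v hu hbest
end

section
/- Let a, b be natural numbers with 0 < b < a and assume 2·(a mod b) ≠ b (equivalently, a/b ≠ a_0 + 1/2). Let u, v be natural numbers with u > 0 such that |a·u − b·v| < |a·u' − b·v'| for all pairs of natural numbers (v', u') ≠ (v, u) with 0 < u' ≤ u, u' ≤ b, and 0 ≤ v' ≤ a. Then in fact |a·u − b·v| < |a·u' − b·v'| for all pairs of natural numbers (v', u') ≠ (v, u) with 0 < u' ≤ u (with v' unbounded). -/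
private lemma zlb1 (b c k z : ℤ) (hb : 0 < b) (hcb : c < b)
    (hz : z = c + b * k) : min c (b - c) ≤ |z| := by
  rcases le_or_gt 0 k with hk | hk
  · have : c ≤ z := by nlinarith
    calc min c (b - c) ≤ c := min_le_left _ _
      _ ≤ z := this
      _ ≤ |z| := le_abs_self z
  · have hk1 : k ≤ -1 := by omega
    have : z ≤ c - b := by nlinarith
    calc min c (b - c) ≤ b - c := min_le_right _ _
      _ ≤ -z := by linarith
      _ ≤ |z| := neg_le_abs z

private lemma zlb2 (b c k z : ℤ) (hb : 0 < b) (hc0 : 0 ≤ c) (hcb : c < b)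
    (hz : z = c + b * k) (hk : k ≠ 0) : b - c ≤ |z| := by
  rcases hk.lt_or_gt with hk' | hk'
  · have hk1 : k ≤ -1 := by omega
    have : z ≤ c - b := by nlinarith
    calc b - c ≤ -z := by linarith
      _ ≤ |z| := neg_le_abs z
  · have hk1 : 1 ≤ k := by omega
    have : c + b ≤ z := by nlinarith
    calc b - c ≤ z := by linarith
      _ ≤ |z| := le_abs_self z

private lemma zlb3 (b c k z : ℤ) (hb : 0 < b) (hc0 : 0 ≤ c) (hcb : c < b)
    (hz : z = c + b * k) (hk : k ≠ -1) : c ≤ |z| := by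
  rcases le_or_gt 0 k with hk' | hk'
  · have : c ≤ z := by nlinarith
    calc c ≤ z := this
      _ ≤ |z| := le_abs_self z
  · have hk1 : k ≤ -2 := by omega
    have : z ≤ c - 2 * b := by nlinarith
    calc c ≤ -z := by linarith
      _ ≤ |z| := neg_le_abs z

/-- (the "0*) ⇒ 1*)" step in the proof of Corollary 2.2).
Let `0 < b < a` with `2·(a mod b) ≠ b` (i.e. `a/b ≠ a_0 + 1/2` where `a_0 = a div b`).
If `u > 0` and `|a·u − b·v| < |a·u' − b·v'|` for all pairs `(v', u') ≠ (v, u)` with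
`0 < u' ≤ u`, `u' ≤ b` and `0 ≤ v' ≤ a`, then in fact `|a·u − b·v| < |a·u' − b·v'|`
for all pairs `(v', u') ≠ (v, u)` with `0 < u' ≤ u` (with `v'` unbounded). -/
theorem bounded_minimality_implies_minimality
    (a b : ℕ) (hb : 0 < b) (hba : b < a) (hhalf : 2 * (a % b) ≠ b)
    (u v : ℕ) (hu : 0 < u)
    (hbdd : ∀ v' u' : ℕ, (v', u') ≠ (v, u) → 0 < u' → u' ≤ u → u' ≤ b → v' ≤ a →
      |(a : ℤ) * u - (b : ℤ) * v| < |(a : ℤ) * u' - (b : ℤ) * v'|) :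
    ∀ v' u' : ℕ, (v', u') ≠ (v, u) → 0 < u' → u' ≤ u →
      |(a : ℤ) * u - (b : ℤ) * v| < |(a : ℤ) * u' - (b : ℤ) * v'| := by
  intro v' u' hne hu'0 hu'u
  obtain ⟨g, hgdef⟩ : ∃ x, x = Nat.gcd a b := ⟨_, rfl⟩
  have hga : g ∣ a := hgdef ▸ Nat.gcd_dvd_left a b
  have hgb : g ∣ b := hgdef ▸ Nat.gcd_dvd_right a b
  have hg0 : 0 < g := hgdef ▸ Nat.gcd_pos_of_pos_right a hb
  obtain ⟨p, hpdef⟩ : ∃ x, x = b / g := ⟨_, rfl⟩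
  have hp0 : 0 < p := hpdef ▸ Nat.div_pos (Nat.le_of_dvd hb hgb) hg0
  have hpb : p ≤ b := hpdef ▸ Nat.div_le_self b g
  obtain ⟨q, hqdef⟩ : ∃ x, x = a / g := ⟨_, rfl⟩
  obtain ⟨u'', hu''def⟩ : ∃ x, x = (u' - 1) % p + 1 := ⟨_, rfl⟩
  have hu''0 : 0 < u'' := by omega
  have hu''p : u'' ≤ p := by
    have := Nat.mod_lt (u' - 1) hp0
    omega
  have hu''b : u'' ≤ b := le_trans hu''p hpb
  have hu''u' : u'' ≤ u' := by
    have := Nat.mod_le (u' - 1) p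
    omega
  have hu''u : u'' ≤ u := le_trans hu''u' hu'u
  obtain ⟨t, htdef⟩ : ∃ x, x = (u' - 1) / p := ⟨_, rfl⟩
  have hsplit : u' = u'' + p * t := by
    have hdm := Nat.div_add_mod (u' - 1) p
    rw [← htdef] at hdm
    omega
  obtain ⟨c, hcdef⟩ : ∃ x, x = (a * u'') % b := ⟨_, rfl⟩
  obtain ⟨v₀, hv₀def⟩ : ∃ x, x = (a * u'') / b := ⟨_, rfl⟩
  have hcb : c < b := hcdef ▸ Nat.mod_lt _ hb
  have he2 : b * v₀ + c = a * u'' := by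
    rw [hv₀def, hcdef]; exact Nat.div_add_mod _ _
  have he2Z : (a : ℤ) * u'' = b * v₀ + c := by exact_mod_cast he2.symm
  have he3 : (a : ℤ) * p = (q : ℤ) * b := by
    obtain ⟨a', ha'⟩ := hga
    obtain ⟨b', hb'⟩ := hgb
    have h1 : p = b' := by rw [hpdef, hb', Nat.mul_div_cancel_left _ hg0]
    have h2 : q = a' := by rw [hqdef, ha', Nat.mul_div_cancel_left _ hg0]
    subst h1 h2 ha' hb'
    push_cast
    ring
  have hz : (a : ℤ) * u' - b * v' = c + b * ((v₀ : ℤ) + q * t - v') := by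
    have e1 : (u' : ℤ) = u'' + p * t := by exact_mod_cast hsplit
    linear_combination (a : ℤ) * e1 + he2Z + (t : ℤ) * he3
  have hv₀a : v₀ ≤ a := by
    have h1 : a * u'' ≤ a * b := Nat.mul_le_mul_left a hu''b
    rw [hv₀def]
    calc a * u'' / b ≤ a * b / b := Nat.div_le_div_right h1
      _ = a := Nat.mul_div_cancel a hb
  have hv₀a1 : 0 < c → v₀ + 1 ≤ a := by
    intro hc0
    have hub : u'' < b := by
      rcases lt_or_eq_of_le hu''b with h | h
      · exact h
      · exfalso
        have : c = 0 := by rw [hcdef, h, Nat.mul_mod_left]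
        omega
    have h1 : a * u'' < a * b := by
      have := Nat.mul_lt_mul_of_lt_of_le hub (le_refl a) (by omega)
      calc a * u'' = u'' * a := Nat.mul_comm _ _
        _ < b * a := this
        _ = a * b := Nat.mul_comm _ _
    have h2 : v₀ < a := by
      rw [hv₀def]
      exact Nat.div_lt_of_lt_mul (by rwa [Nat.mul_comm a b] at h1)
    omega
  have habs0 : (a : ℤ) * u'' - b * v₀ = c := by linarith [he2Z]
  have habs1 : (a : ℤ) * u'' - b * ((v₀ : ℤ) + 1) = c - b := by linarith [he2Z]
  have hc0 : (0 : ℤ) ≤ (c : ℤ) := Int.ofNat_nonneg c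
  have hcbZ : (c : ℤ) < b := by exact_mod_cast hcb
  have hbZ : (0 : ℤ) < b := by exact_mod_cast hb
  by_cases h₀ : (v₀, u'') = (v, u)
  · rw [Prod.mk.injEq] at h₀
    obtain ⟨hv0, hu0⟩ := h₀
    have hu'eq : u' = u'' := by omega
    have ht0 : t = 0 := by
      have hpt : p * t = 0 := by omega
      rcases Nat.mul_eq_zero.mp hpt with h | h
      · omega
      · exact h
    have hM : |(a : ℤ) * u - b * v| = c := by
      rw [← hu0, ← hv0, habs0, abs_of_nonneg hc0]
    by_cases hcc : 2 * c < b
    · have hvne : v' ≠ v₀ := by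
        intro h
        exact hne (by rw [h, hu'eq, hv0, hu0])
      have hk : ((v₀ : ℤ) + q * t - v') ≠ 0 := by
        intro h
        apply hvne
        rw [ht0] at h
        push_cast at h
        exact_mod_cast (by linarith : (v' : ℤ) = v₀)
      have hlow := zlb2 b c _ _ hbZ hc0 hcbZ hz hk
      have h2c : 2 * (c : ℤ) < b := by exact_mod_cast hcc
      rw [hM]
      linarith
    · exfalso
      have hcpos : 0 < c := by omega
      have hne' : (v₀ + 1, u'') ≠ (v, u) := by
        intro h
        rw [Prod.mk.injEq] at h
        omega
      have hlt := hbdd (v₀ + 1) u'' hne' hu''0 hu''u hu''b (hv₀a1 hcpos)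
      push_cast at hlt
      rw [hM, habs1] at hlt
      have habscb : |(c : ℤ) - b| = b - c := by
        rw [abs_of_nonpos (by linarith), neg_sub]
      rw [habscb] at hlt
      have h2c : (b : ℤ) ≤ 2 * c := by exact_mod_cast Nat.le_of_not_lt hcc
      linarith
  · by_cases h₁ : (v₀ + 1, u'') = (v, u)
    · rw [Prod.mk.injEq] at h₁
      obtain ⟨hv1, hu1⟩ := h₁
      have hu'eq : u' = u'' := by omega
      have ht0 : t = 0 := by
        have hpt : p * t = 0 := by omega
        rcases Nat.mul_eq_zero.mp hpt with h | h
        · omega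
        · exact h
      have hM : |(a : ℤ) * u - b * v| = b - c := by
        rw [← hu1, ← hv1]
        push_cast
        rw [habs1, abs_of_nonpos (by linarith), neg_sub]
      by_cases hcc : 2 * c ≤ b
      · exfalso
        have hne' : (v₀, u'') ≠ (v, u) := by
          intro h
          rw [Prod.mk.injEq] at h
          omega
        have hlt := hbdd v₀ u'' hne' hu''0 hu''u hu''b hv₀a
        rw [hM, habs0, abs_of_nonneg hc0] at hlt
        have h2c : 2 * (c : ℤ) ≤ b := by exact_mod_cast hcc
        linarith
      · have hvne : v' ≠ v₀ + 1 := by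
          intro h
          apply hne
          rw [h, hu'eq, ← hv1, ← hu1]
        have hk : ((v₀ : ℤ) + q * t - v') ≠ -1 := by
          intro h
          apply hvne
          rw [ht0] at h
          push_cast at h
          exact_mod_cast (by linarith : (v' : ℤ) = (v₀ : ℤ) + 1)
        have hlow := zlb3 b c _ _ hbZ hc0 hcbZ hz hk
        have h2c : (b : ℤ) < 2 * c := by exact_mod_cast Nat.lt_of_not_le hcc
        rw [hM]
        linarith
    · have hlb := zlb1 b c _ _ hbZ hcbZ hz
      by_cases hcc : 2 * c ≤ b
      · have hlt := hbdd v₀ u'' h₀ hu''0 hu''u hu''b hv₀a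
        rw [habs0, abs_of_nonneg hc0] at hlt
        have h2c : 2 * (c : ℤ) ≤ b := by exact_mod_cast hcc
        have hmin : min (c : ℤ) (b - c) = c := min_eq_left (by linarith)
        rw [hmin] at hlb
        linarith
      · have hcpos : 0 < c := by omega
        have hlt := hbdd (v₀ + 1) u'' h₁ hu''0 hu''u hu''b (hv₀a1 hcpos)
        push_cast at hlt
        rw [habs1] at hlt
        have habscb : |(c : ℤ) - b| = b - c := by
          rw [abs_of_nonpos (by linarith), neg_sub]
        rw [habscb] at hlt
        have h2c : (b : ℤ) < 2 * c := by exact_mod_cast Nat.lt_of_not_le hcc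
        have hmin : min (c : ℤ) (b - c) = b - c := min_eq_right (by linarith)
        rw [hmin] at hlb
        linarith
end

section
/- Let c be a prime number, let N be a natural number, and let z_0, …, z_{N−1} be natural numbers with 0 < z_i < c for every i < N. Then there exist positive natural numbers a_0, …, a_{N−1} such that the sequence (v_i) defined by v_{-2} = 0, v_{-1} = 1, and v_i = v_{i-1}·a_i + v_{i-2} for 0 ≤ i < N satisfies v_i ≡ z_i (mod c) for every 0 ≤ i < N. In particular, c divides no v_j for −1 ≤ j < N. -/
/-!
The digits are chosen one at a time. Modulo the prime `c` the recurrence reads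
`v_i = v_{i-1} a_i + v_{i-2}`, so once `v_{i-1} ≢ 0` the digit `a_i` can be taken to be any
positive representative of `(z_i - v_{i-2}) / v_{i-1}`. This makes `v_i ≡ z_i ≢ 0`, which keeps
the induction going, and changing `a_i` does not affect the earlier numerators.
-/

/-- `convNum a k` is the numerator `v_{k-2}` of the continued fraction `[a 0; a 1, …]`. -/
def convNum (a : ℕ → ℕ) : ℕ → ℕ
  | 0 => 0
  | 1 => 1
  | k + 2 => convNum a (k + 1) * a k + convNum a k

theorem eq_convNum_of_recurrence {a v : ℕ → ℕ} {N : ℕ} (h0 : v 0 = 0) (h1 : v 1 = 1)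
    (hrec : ∀ i < N, v (i + 2) = v (i + 1) * a i + v i) :
    ∀ k ≤ N + 1, v k = convNum a k := by
  have hpair : ∀ k ≤ N, v k = convNum a k ∧ v (k + 1) = convNum a (k + 1) := by
    intro k hk
    induction k with
    | zero => exact ⟨h0, h1⟩
    | succ k ih =>
      obtain ⟨hk0, hk1⟩ := ih (by omega)
      exact ⟨hk1, by rw [hrec k (by omega), hk0, hk1, convNum]⟩
  intro k hk
  cases k with
  | zero => exact h0
  | succ k => exact (hpair k (by omega)).2

theorem convNum_congr {a b : ℕ → ℕ} {n : ℕ} (h : ∀ i < n, a i = b i) :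
    ∀ k ≤ n + 1, convNum a k = convNum b k :=
  eq_convNum_of_recurrence rfl rfl fun i hi => by rw [convNum, h i hi]

theorem ZMod.exists_pos_natCast_eq {n : ℕ} [NeZero n] (x : ZMod n) :
    ∃ m : ℕ, 0 < m ∧ (m : ZMod n) = x :=
  ⟨x.val + n, by have := NeZero.pos n; omega, by simp⟩

theorem convNum_cast_ne_zero {R : Type*} [Semiring R] [Nontrivial R] {a : ℕ → ℕ}
    {z : ℕ → R} {N : ℕ} (ha : ∀ i < N, (convNum a (i + 2) : R) = z i) (hz : ∀ i < N, z i ≠ 0)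
    {k : ℕ} (hk1 : 1 ≤ k) (hk : k ≤ N + 1) : (convNum a k : R) ≠ 0 := by
  obtain _ | _ | i := k
  · omega
  · simp [convNum]
  · rw [ha i (by omega)]
    exact hz i (by omega)

theorem exists_pos_digits_convNum_cast_eq {p : ℕ} [Fact p.Prime] {z : ℕ → ZMod p} {N : ℕ}
    (hz : ∀ i < N, z i ≠ 0) :
    ∃ a : ℕ → ℕ, (∀ i, 0 < a i) ∧ ∀ i < N, (convNum a (i + 2) : ZMod p) = z i := by
  induction N with
  | zero => exact ⟨fun _ => 1, fun _ => one_pos, fun _ h => absurd h (Nat.not_lt_zero _)⟩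
  | succ N ih =>
    obtain ⟨a, hpos, ha⟩ := ih fun i hi => hz i (by omega)
    have hq : (convNum a (N + 1) : ZMod p) ≠ 0 :=
      convNum_cast_ne_zero ha (fun i hi => hz i (by omega)) (by omega) le_rfl
    obtain ⟨b, hb, hbz⟩ := ZMod.exists_pos_natCast_eq
      ((z N - (convNum a N : ZMod p)) / (convNum a (N + 1) : ZMod p))
    have hagree : ∀ i < N, Function.update a N b i = a i := fun i hi =>
      Function.update_of_ne hi.ne _ _
    have hprefix := convNum_congr hagree
    refine ⟨Function.update a N b, fun i => ?_, fun i hi => ?_⟩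
    · by_cases hi : i = N
      · rw [hi, Function.update_self]; exact hb
      · rw [Function.update_of_ne hi]; exact hpos i
    · rcases Nat.lt_succ_iff_lt_or_eq.mp hi with hi | rfl
      · rw [hprefix (i + 2) (by omega)]; exact ha i hi
      · rw [convNum, hprefix (i + 1) le_rfl, hprefix i (by omega), Function.update_self]
        push_cast
        rw [hbz, mul_div_cancel₀ _ hq, sub_add_cancel]

/-- the coding construction in subsection 3.1.
Let `c` be prime and `z_0, …, z_{N−1}` naturals with `0 < z_i < c`. Then there are
positive naturals `a_0, …, a_{N−1}` such that the numerators of the convergents of the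
continued fraction `[a_0; a_1, …, a_{N−1}]` — i.e. the sequence given by `v_{-2} = 0`,
`v_{-1} = 1`, `v_i = v_{i-1}·a_i + v_{i-2}` — satisfy `v_i ≡ z_i (mod c)` for all
`0 ≤ i < N`; in particular `c` divides no `v_j` for `−1 ≤ j < N`.
(Indices are shifted by 2: `v k` below denotes `v_{k-2}`.) -/
theorem exists_continued_fraction_coding
    (c : ℕ) (hc : c.Prime) (N : ℕ) (z : ℕ → ℕ)
    (hz : ∀ i < N, 0 < z i ∧ z i < c) :
    ∃ a : ℕ → ℕ, (∀ i < N, 0 < a i) ∧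
      ∀ v : ℕ → ℕ,
        v 0 = 0 → v 1 = 1 → (∀ i < N, v (i + 2) = v (i + 1) * a i + v i) →
          (∀ i < N, v (i + 2) ≡ z i [MOD c]) ∧
          (∀ k, 1 ≤ k → k ≤ N + 1 → ¬ c ∣ v k) := by
  have := Fact.mk hc
  have hz' : ∀ i < N, (z i : ZMod c) ≠ 0 := fun i hi => by
    rw [Ne, ZMod.natCast_eq_zero_iff]
    exact Nat.not_dvd_of_pos_of_lt (hz i hi).1 (hz i hi).2
  obtain ⟨a, hpos, ha⟩ := exists_pos_digits_convNum_cast_eq hz'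
  refine ⟨a, fun i _ => hpos i, fun v h0 h1 hrec => ?_⟩
  have hv := eq_convNum_of_recurrence h0 h1 hrec
  refine ⟨fun i hi => ?_, fun k hk1 hk => ?_⟩
  · rw [hv (i + 2) (by omega), ← ZMod.natCast_eq_natCast_iff]
    exact ha i hi
  · rw [hv k hk, ← ZMod.natCast_eq_zero_iff]
    exact convNum_cast_ne_zero ha hz' hk1 hk
end

section
/- Let a, b, c be positive natural numbers. Then a is the least positive natural number x such that ((a·b·c² + c)·x) mod (a·c) = 0; that is, ((a·b·c² + c)·a) mod (a·c) = 0, and for every x with 0 < x < a one has ((a·b·c² + c)·x) mod (a·c) ≠ 0. -/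
/-- the parameter-free definition of the scalar `a` in
`⟨M⁺, ac, abc² + c⟩`: `a·1 = min{x > 0 : γ°x = 0}` where `γ°x = ((αβ + c)·x) mod α`,
with `α = a·c`, `α·β + c = a·b·c² + c`. For positive naturals `a, b, c`:
`((a·b·c² + c)·a) mod (a·c) = 0`, and for every `x` with `0 < x < a`,
`((a·b·c² + c)·x) mod (a·c) ≠ 0`. -/
theorem a_is_least_zero_of_gamma_aux
    (a b c : ℕ) (ha : 0 < a) (hb : 0 < b) (hc : 0 < c) :
    (a * b * c ^ 2 + c) * a % (a * c) = 0 ∧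
    ∀ x, 0 < x → x < a → (a * b * c ^ 2 + c) * x % (a * c) ≠ 0 := by
  constructor
  · have : (a * b * c ^ 2 + c) * a = (a * c) * (a * b * c + 1) := by ring
    simp [this, Nat.mul_mod_right]
  · intro x hx hxa h
    have hdvd : a * c ∣ (a * b * c ^ 2 + c) * x := Nat.dvd_of_mod_eq_zero h
    have h1 : a * c ∣ (a * c) * (b * c * x) := Dvd.intro _ rfl
    have h2 : (a * b * c ^ 2 + c) * x = (a * c) * (b * c * x) + c * x := by ring
    have h3 : a * c ∣ c * x := (Nat.dvd_add_right h1).mp (h2 ▸ hdvd)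
    have h4 : a ∣ x := by
      rcases h3 with ⟨k, hk⟩
      have : c * x = c * (a * k) := by linarith [hk]; 
      exact ⟨k, Nat.eq_of_mul_eq_mul_left hc this⟩
    exact absurd (Nat.le_of_dvd hx h4) (not_le.mpr hxa)
end
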